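/- For 0 < λ < 4 with θ = π - arccos((λ-2)/2), let R = Q_{n-1}(λ)⁻¹ (assumed to exist). Then ξ(δ, λ) := 2 - λ + δ + R_{1,1} + R_{1,n-1} + R_{n-1,1} + R_{n-1,n-1} equals δ - 2 sin θ · tan(nθ/2), provided cos(nθ/2) ≠ 0. -/
import Mathlib


open Real Matrix

/-- `Q_k(λ)`: `k×k` symmetric tridiagonal matrix with diagonal `λ-2` and off-diagonal `1`. -/
def Qmat (k : ℕ) (lam : ℝ) : Matrix (Fin k) (Fin k) ℝ :=
  fun i j => if i = j then lam - 2
    else if i.val + 1 = j.val ∨ j.val + 1 = i.val then 1 else 0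

/-- The explicit inverse entry numerator. -/
noncomputable def Fg (n : ℕ) (θ : ℝ) (I K : ℕ) : ℝ :=
  Real.cos (((n : ℝ) - |(I : ℝ) - (K : ℝ)|) * θ)
    - Real.cos (((n : ℝ) - (I : ℝ) - (K : ℝ)) * θ)

lemma Fg_zero (n K : ℕ) (θ : ℝ) : Fg n θ 0 K = 0 := by
  simp [Fg]

lemma Fg_top (n K : ℕ) (θ : ℝ) (hK : K ≤ n) : Fg n θ n K = 0 := by
  unfold Fg
  rw [abs_of_nonneg (sub_nonneg.mpr (Nat.cast_le.mpr hK))]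
  rw [show ((n:ℝ) - ((n:ℝ) - K)) * θ = (K:ℝ) * θ by ring,
      show ((n:ℝ) - (n:ℝ) - K) * θ = -((K:ℝ) * θ) by ring, Real.cos_neg, sub_self]

lemma coskey (θ x y : ℝ) :
    (Real.cos (x - θ) - Real.cos (y + θ)) + (-2*Real.cos θ) * (Real.cos x - Real.cos y)
      + (Real.cos (x + θ) - Real.cos (y - θ)) = 0 := by
  rw [Real.cos_sub, Real.cos_add, Real.cos_add, Real.cos_sub]; ring

lemma coskey2 (θ w y : ℝ) :
    (Real.cos (w - θ) - Real.cos (y + θ)) + (-2*Real.cos θ) * (Real.cos w - Real.cos y)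
      + (Real.cos (w - θ) - Real.cos (y - θ)) = 2 * Real.sin θ * Real.sin w := by
  rw [Real.cos_sub, Real.cos_add, Real.cos_sub]; ring

lemma Fg_rec (n I K : ℕ) (θ : ℝ) :
    Fg n θ I K + (-2*Real.cos θ) * Fg n θ (I+1) K + Fg n θ (I+2) K
      = if I + 1 = K then 2 * Real.sin θ * Real.sin (n * θ) else 0 := by
  unfold Fg
  push_cast
  rcases lt_trichotomy (I+1) K with h | h | h
  · rw [if_neg (by omega)]
    have c2 : (I:ℝ) + 2 ≤ K := by exact_mod_cast (by omega : I + 2 ≤ K)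
    rw [abs_of_nonpos (by linarith), abs_of_nonpos (by linarith),
        abs_of_nonpos (by linarith)]
    have h1 := coskey θ (((n:ℝ) - (K:ℝ) + I + 1) * θ) (((n:ℝ) - I - 1 - K) * θ)
    ring_nf at h1 ⊢
    linear_combination h1
  · rw [if_pos h]
    have hKI : (K:ℝ) = (I:ℝ) + 1 := by exact_mod_cast h.symm
    rw [hKI]
    rw [show |(I:ℝ) - ((I:ℝ)+1)| = 1 by rw [abs_of_nonpos (by linarith)]; ring,
        show |(I:ℝ) + 1 - ((I:ℝ)+1)| = 0 by simp,
        show |(I:ℝ) + 2 - ((I:ℝ)+1)| = 1 by rw [abs_of_nonneg (by linarith)]; ring]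
    have h1 := coskey2 θ ((n:ℝ) * θ) (((n:ℝ) - I - 1 - (I + 1)) * θ)
    ring_nf at h1 ⊢
    linear_combination h1
  · rw [if_neg (by omega)]
    have c2 : (K:ℝ) ≤ (I:ℝ) := by exact_mod_cast (by omega : K ≤ I)
    rw [abs_of_nonneg (by linarith), abs_of_nonneg (by linarith),
        abs_of_nonneg (by linarith)]
    have h1 := coskey θ (((n:ℝ) - I - 1 + K) * θ) (((n:ℝ) - I - 1 - K) * θ)
    ring_nf at h1 ⊢
    linear_combination h1

lemma qmul (n : ℕ) (hn : 3 ≤ n) (lam θ : ℝ) (hlam : lam - 2 = -2 * Real.cos θ)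
    (hD : 2 * Real.sin θ * Real.sin (n * θ) ≠ 0) :
    Qmat (n-1) lam * (Matrix.of fun i k : Fin (n-1) =>
        Fg n θ (i.val+1) (k.val+1) / (2 * Real.sin θ * Real.sin (n * θ))) = 1 := by
  set D := 2 * Real.sin θ * Real.sin (n * θ) with hDdef
  ext i k
  rw [Matrix.mul_apply]
  set R : Matrix (Fin (n-1)) (Fin (n-1)) ℝ :=
    Matrix.of fun i k : Fin (n-1) => Fg n θ (i.val+1) (k.val+1) / D with hR
  have hsplit : ∀ j : Fin (n-1), Qmat (n-1) lam i j * R j k =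
      (if (j:ℕ) + 1 = (i:ℕ) then R j k else 0)
      + (if j = i then (lam-2) * R j k else 0)
      + (if (j:ℕ) = (i:ℕ) + 1 then R j k else 0) := by
    intro j
    simp only [Qmat, Fin.ext_iff]
    split_ifs <;> first | ring1 | (exfalso; omega)
  rw [Finset.sum_congr rfl (fun j _ => hsplit j), Finset.sum_add_distrib,
      Finset.sum_add_distrib]
  have hS2 : (∑ j : Fin (n-1), if j = i then (lam-2) * R j k else 0)
      = (lam - 2) * (Fg n θ (i.val+1) (k.val+1) / D) := by
    rw [Finset.sum_ite_eq' Finset.univ i (fun j => (lam-2) * R j k)]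
    simp [hR]
  have hS1 : (∑ j : Fin (n-1), if (j:ℕ) + 1 = (i:ℕ) then R j k else 0)
      = Fg n θ i.val (k.val+1) / D := by
    by_cases hi : 0 < i.val
    · have hj0 : i.val - 1 < n - 1 := by omega
      have heq : ∀ j : Fin (n-1), ((j:ℕ) + 1 = (i:ℕ)) ↔ (j = ⟨i.val - 1, hj0⟩) := by
        intro j; rw [Fin.ext_iff]; constructor <;> intro h1 <;> simp at h1 ⊢ <;> omega
      simp_rw [heq]
      rw [Finset.sum_ite_eq' Finset.univ _ (fun j => R j k)]
      simp only [Finset.mem_univ, if_pos, hR, Matrix.of_apply]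
      congr 2
      omega
    · have : ∀ j : Fin (n-1), ¬((j:ℕ) + 1 = (i:ℕ)) := by intro j; omega
      simp only [this, if_false, Finset.sum_const_zero]
      have : i.val = 0 := by omega
      rw [this, Fg_zero, zero_div]
  have hS3 : (∑ j : Fin (n-1), if (j:ℕ) = (i:ℕ) + 1 then R j k else 0)
      = Fg n θ (i.val+2) (k.val+1) / D := by
    by_cases hi : i.val + 1 < n - 1
    · have heq : ∀ j : Fin (n-1), ((j:ℕ) = (i:ℕ) + 1) ↔ (j = ⟨i.val + 1, hi⟩) := by
        intro j; rw [Fin.ext_iff]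
      simp_rw [heq]
      rw [Finset.sum_ite_eq' Finset.univ _ (fun j => R j k)]
      simp [hR]
    · have : ∀ j : Fin (n-1), ¬((j:ℕ) = (i:ℕ) + 1) := by
        intro j; have := j.isLt; omega
      simp only [this, if_false, Finset.sum_const_zero]
      have he : i.val + 2 = n := by have := i.isLt; omega
      rw [he, Fg_top n _ θ (by have := k.isLt; omega), zero_div]
  rw [hS1, hS2, hS3]
  have hrec := Fg_rec n i.val (k.val+1) θ
  have : Fg n θ i.val (k.val+1) / D + (lam-2) * (Fg n θ (i.val+1) (k.val+1) / D)
      + Fg n θ (i.val+2) (k.val+1) / D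
      = (Fg n θ i.val (k.val+1) + (-2*Real.cos θ) * Fg n θ (i.val+1) (k.val+1)
        + Fg n θ (i.val+2) (k.val+1)) / D := by
    rw [hlam]; ring
  rw [this, hrec, Matrix.one_apply]
  by_cases hik : i = k
  · rw [if_pos (by rw [hik]), if_pos hik, div_self hD]
  · rw [if_neg (fun h => hik (Fin.ext (by omega))), if_neg hik, zero_div]

theorem stmt17 (n : ℕ) (hn : 3 ≤ n) (lam δ : ℝ) (h0 : 0 < lam) (h4 : lam < 4)
    (θ : ℝ) (hθ : θ = Real.pi - Real.arccos ((lam - 2) / 2))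
    (hsin : Real.sin (n * θ) ≠ 0) (hcos : Real.cos (n * θ / 2) ≠ 0)
    (hU : IsUnit (Qmat (n - 1) lam).det) :
    2 - lam + δ +
      (Qmat (n - 1) lam)⁻¹ ⟨0, by omega⟩ ⟨0, by omega⟩ +
      (Qmat (n - 1) lam)⁻¹ ⟨0, by omega⟩ ⟨n - 2, by omega⟩ +
      (Qmat (n - 1) lam)⁻¹ ⟨n - 2, by omega⟩ ⟨0, by omega⟩ +
      (Qmat (n - 1) lam)⁻¹ ⟨n - 2, by omega⟩ ⟨n - 2, by omega⟩ =
    δ - 2 * Real.sin θ * Real.tan (n * θ / 2) := by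
  have hn3 : (3:ℝ) ≤ (n:ℝ) := by exact_mod_cast hn
  have ht1 : -1 ≤ (lam - 2)/2 := by linarith
  have ht2 : (lam - 2)/2 ≤ 1 := by linarith
  have hcθ : Real.cos θ = -((lam - 2)/2) := by
    rw [hθ, Real.cos_pi_sub, Real.cos_arccos ht1 ht2]
  have hlam : lam - 2 = -2 * Real.cos θ := by rw [hcθ]; ring
  have hsθ : Real.sin θ ≠ 0 := by
    rw [hθ, Real.sin_pi_sub, Real.sin_arccos]
    have hpos : 0 < 1 - ((lam-2)/2)^2 := by nlinarith
    exact (Real.sqrt_pos.mpr hpos).ne'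
  have hD : 2 * Real.sin θ * Real.sin (n * θ) ≠ 0 :=
    mul_ne_zero (mul_ne_zero two_ne_zero hsθ) hsin
  have hinv := Matrix.inv_eq_right_inv (qmul n hn lam θ hlam hD)
  rw [hinv]
  simp only [Matrix.of_apply]
  have hids : n - 2 + 1 = n - 1 := by omega
  rw [hids]
  -- corner entries
  have hcast : ((n-1 : ℕ):ℝ) = (n:ℝ) - 1 := by
    rw [Nat.cast_sub (by omega : 1 ≤ n), Nat.cast_one]
  have e11 : Fg n θ (0+1) (0+1) = Real.cos ((n:ℝ)*θ) - Real.cos ((n:ℝ)*θ - 2*θ) := by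
    unfold Fg
    push_cast
    rw [show |(1:ℝ) - 1| = 0 by norm_num]
    rw [show ((n:ℝ) - 0)*θ = (n:ℝ)*θ by ring,
        show ((n:ℝ) - 1 - 1)*θ = (n:ℝ)*θ - 2*θ by ring]
  have e1m : Fg n θ (0+1) (n-1) = Real.cos (2*θ) - 1 := by
    unfold Fg
    rw [hcast]
    push_cast
    rw [show |(1:ℝ) - ((n:ℝ)-1)| = (n:ℝ) - 2 from by
          rw [abs_of_nonpos (by linarith)]; ring]
    rw [show ((n:ℝ) - ((n:ℝ)-2))*θ = 2*θ by ring,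
        show ((n:ℝ) - 1 - ((n:ℝ)-1))*θ = 0 by ring, Real.cos_zero]
  have em1 : Fg n θ (n-1) (0+1) = Real.cos (2*θ) - 1 := by
    unfold Fg
    rw [hcast]
    push_cast
    rw [show |(n:ℝ) - 1 - 1| = (n:ℝ) - 2 from by
          rw [abs_of_nonneg (by linarith)]; ring]
    rw [show ((n:ℝ) - ((n:ℝ)-2))*θ = 2*θ by ring,
        show ((n:ℝ) - ((n:ℝ)-1) - 1)*θ = 0 by ring, Real.cos_zero]
  have emm : Fg n θ (n-1) (n-1) = Real.cos ((n:ℝ)*θ) - Real.cos ((n:ℝ)*θ - 2*θ) := by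
    unfold Fg
    rw [hcast]
    rw [show |((n:ℝ)-1) - ((n:ℝ)-1)| = 0 by norm_num]
    rw [show ((n:ℝ) - 0)*θ = (n:ℝ)*θ by ring,
        show ((n:ℝ) - ((n:ℝ)-1) - ((n:ℝ)-1))*θ = -((n:ℝ)*θ - 2*θ) by ring, Real.cos_neg]
  rw [e11, e1m, em1, emm]
  -- final trigonometric identity
  rw [Real.tan_eq_sin_div_cos]
  have hsm : Real.sin ((n:ℝ)*θ) = 2 * Real.sin ((n:ℝ)*θ/2) * Real.cos ((n:ℝ)*θ/2) := by
    conv_lhs => rw [show (n:ℝ)*θ = 2*((n:ℝ)*θ/2) by ring]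
    rw [Real.sin_two_mul]
  have hcm : Real.cos ((n:ℝ)*θ) = 1 - 2 * Real.sin ((n:ℝ)*θ/2)^2 := by
    conv_lhs => rw [show (n:ℝ)*θ = 2*((n:ℝ)*θ/2) by ring]
    rw [Real.cos_two_mul]
    linear_combination 2 * Real.sin_sq_add_cos_sq ((n:ℝ)*θ/2)
  have hsub : Real.cos ((n:ℝ)*θ - 2*θ)
      = Real.cos ((n:ℝ)*θ) * Real.cos (2*θ) + Real.sin ((n:ℝ)*θ) * Real.sin (2*θ) :=
    Real.cos_sub _ _
  have h2c : Real.cos (2*θ) = 1 - 2 * Real.sin θ^2 := by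
    rw [Real.cos_two_mul]
    linear_combination 2 * Real.sin_sq_add_cos_sq θ
  have h2s : Real.sin (2*θ) = 2 * Real.sin θ * Real.cos θ := Real.sin_two_mul θ
  have hlam2 : lam = 2 - 2 * Real.cos θ := by linarith
  rw [hsub, h2c, h2s, hcm, hsm, hlam2]
  have hs2 : Real.sin ((n:ℝ)*θ/2) ≠ 0 := by
    intro h
    apply hsin
    rw [hsm, h]; ring
  field_simp
  ring
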